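/- arXiv:1903.03944 — 2 statements merged into one kernel-verified Lean document; each statement's English description precedes it below -/
import Mathlib

section
/- Consider a maximization linear program max λ subject to: for all i ∈ [n], ∑_{j,k} m·p_j·w_{ijk}·x_{jk} ≥ λ; for all i ∈ [n], ∑_{j,k} m·p_j·a_{ijk}·x_{jk} ≤ c_i; for all j, ∑_k x_{jk} ≤ 1; x ≥ 0, where p is a probability distribution over a finite request set J. Let W_E be its optimal value. Let R be a random multiset of m requests drawn i.i.d. from p, and let W_R be the optimal value of the corresponding LP with requests R (in which the capacity constraints are ∑_{j∈R,k} a_{ijk}x_{jk} ≤ c_i and objective constraints ∑_{j∈R,k} w_{ijk}x_{jk} ≥ λ). Then E[W_R] ≤ W_E. -/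
/-!
Fix `ε > 0` and an `ε`-optimal solution `x_R` of every random instance `R`. Pooling, for each
request type `j`, the mass that `x_R` puts on the slots holding `j`, and averaging over `R`,
gives a vector whose mass at `j` is at most the expected number `m p_j` of copies of `j`.
Rescaled by `m p_j` it is feasible for the expected instance, and by linearity its capacity
loads and objective values are the averages of those of the `x_R`. Hence `E[W_R] - ε ≤ W_E`.
-/

open Finset

section ProductDistribution

variable {ι α : Type*} [Fintype ι] [DecidableEq ι] [Fintype α] {p : α → ℝ}

lemma sum_pi_prod_eq_one (hp1 : ∑ j, p j = 1) : ∑ R : ι → α, ∏ t, p (R t) = 1 := by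
  rw [← Fintype.prod_sum (fun _ j => p j), hp1, prod_const_one]

lemma sum_pi_prod_mul_apply (hp1 : ∑ j, p j = 1) (t₀ : ι) (h : α → ℝ) :
    ∑ R : ι → α, (∏ t, p (R t)) * h (R t₀) = ∑ j, p j * h j := by
  have hsplit : ∀ R : ι → α,
      (∏ t, p (R t)) * h (R t₀) = ∏ t, p (R t) * if t = t₀ then h (R t) else 1 := by
    intro R
    rw [prod_mul_distrib, prod_ite_eq' univ t₀, if_pos (mem_univ _)]
  simp_rw [hsplit]
  rw [← Fintype.prod_sum (fun t j => p j * if t = t₀ then h j else 1),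
    prod_eq_single t₀ (fun t _ ht => by simp [ht, hp1]) (by simp)]
  simp

lemma sum_pi_prod_mul_card_fiber [DecidableEq α] (hp1 : ∑ j, p j = 1) (j : α) :
    ∑ R : ι → α, (∏ t, p (R t)) * (#{t | R t = j} : ℝ) = Fintype.card ι * p j := by
  simp_rw [natCast_card_filter, mul_sum]
  rw [sum_comm]
  simp_rw [sum_pi_prod_mul_apply hp1 _ (fun i => if i = j then (1 : ℝ) else 0)]
  simp

end ProductDistribution

section Aggregate

variable {ι α κ : Type*} [Fintype ι] [DecidableEq α]

def aggregate (R : ι → α) (x : ι → κ → ℝ) (j : α) (k : κ) : ℝ :=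
  ∑ t with R t = j, x t k

lemma sum_sum_mul_aggregate [Fintype α] [Fintype κ] (R : ι → α) (x : ι → κ → ℝ) (f : α → κ → ℝ) :
    ∑ j, ∑ k, f j k * aggregate R x j k = ∑ t, ∑ k, f (R t) k * x t k := by
  rw [← sum_fiberwise univ R fun t => ∑ k, f (R t) k * x t k]
  refine sum_congr rfl fun j _ => ?_
  simp_rw [aggregate, mul_sum]
  rw [sum_comm]
  refine sum_congr rfl fun t ht => ?_
  rw [(mem_filter.1 ht).2]

lemma aggregate_nonneg {R : ι → α} {x : ι → κ → ℝ} (hx0 : ∀ t k, 0 ≤ x t k) (j : α) (k : κ) :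
    0 ≤ aggregate R x j k :=
  sum_nonneg fun t _ => hx0 t k

lemma sum_aggregate_le_card [Fintype κ] {R : ι → α} {x : ι → κ → ℝ}
    (hx1 : ∀ t, ∑ k, x t k ≤ 1) (j : α) :
    ∑ k, aggregate R x j k ≤ #{t | R t = j} := by
  simp only [aggregate]
  rw [sum_comm]
  simpa using sum_le_sum fun t (_ : t ∈ ({t | R t = j} : Finset ι)) => hx1 t

end Aggregate

section MeanAggregate

variable {ι α κ : Type*} [Fintype ι] [DecidableEq ι] [Fintype α] [DecidableEq α]
  {p : α → ℝ} {x : (ι → α) → ι → κ → ℝ}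

def meanAggregate (p : α → ℝ) (x : (ι → α) → ι → κ → ℝ) (j : α) (k : κ) : ℝ :=
  ∑ R : ι → α, (∏ t, p (R t)) * aggregate R (x R) j k

lemma meanAggregate_nonneg (hp : ∀ j, 0 ≤ p j) (hx0 : ∀ R t k, 0 ≤ x R t k) (j : α) (k : κ) :
    0 ≤ meanAggregate p x j k :=
  sum_nonneg fun R _ =>
    mul_nonneg (prod_nonneg fun t _ => hp (R t)) (aggregate_nonneg (hx0 R) j k)

lemma sum_meanAggregate_le [Fintype κ] (hp : ∀ j, 0 ≤ p j) (hp1 : ∑ j, p j = 1)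
    (hx1 : ∀ R t, ∑ k, x R t k ≤ 1) (j : α) :
    ∑ k, meanAggregate p x j k ≤ Fintype.card ι * p j := by
  rw [← sum_pi_prod_mul_card_fiber hp1 j]
  simp only [meanAggregate]
  rw [sum_comm]
  simp_rw [← mul_sum]
  exact sum_le_sum fun R _ =>
    mul_le_mul_of_nonneg_left (sum_aggregate_le_card (hx1 R) j) (prod_nonneg fun t _ => hp (R t))

lemma sum_sum_mul_meanAggregate [Fintype κ] (f : α → κ → ℝ) :
    ∑ j, ∑ k, f j k * meanAggregate p x j k
      = ∑ R : ι → α, (∏ t, p (R t)) * ∑ t, ∑ k, f (R t) k * x R t k := by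
  simp only [meanAggregate, mul_sum, ← sum_sum_mul_aggregate _ (x _) f, mul_left_comm (f _ _)]
  conv_rhs => rw [sum_comm]
  exact sum_congr rfl fun j _ => sum_comm

-- When `card ι * p j = 0` the division is junk, but then `meanAggregate p x j` vanishes.
lemma mul_div_meanAggregate [Fintype κ] (hp : ∀ j, 0 ≤ p j) (hp1 : ∑ j, p j = 1)
    (hx0 : ∀ R t k, 0 ≤ x R t k) (hx1 : ∀ R t, ∑ k, x R t k ≤ 1) (j : α) (k : κ) :
    Fintype.card ι * p j * (meanAggregate p x j k / (Fintype.card ι * p j))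
      = meanAggregate p x j k := by
  refine mul_div_cancel_of_imp' fun h => le_antisymm ?_ (meanAggregate_nonneg hp hx0 j k)
  calc meanAggregate p x j k
      ≤ ∑ k, meanAggregate p x j k :=
        single_le_sum (fun k _ => meanAggregate_nonneg hp hx0 j k) (mem_univ k)
    _ ≤ Fintype.card ι * p j := sum_meanAggregate_le hp hp1 hx1 j
    _ = 0 := h

end MeanAggregate

section InstanceLP

variable {ν ι α κ : Type*} [Fintype ι] [Fintype α] [Fintype κ]

def instanceValues (a w : ν → α → κ → ℝ) (c : ν → ℝ) (R : ι → α) : Set ℝ :=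
  {lam | ∃ x : ι → κ → ℝ, (∀ t k, 0 ≤ x t k) ∧ (∀ t, ∑ k, x t k ≤ 1) ∧
    (∀ i, ∑ t, ∑ k, a i (R t) k * x t k ≤ c i) ∧ (∀ i, lam ≤ ∑ t, ∑ k, w i (R t) k * x t k)}

def expectedInstanceValues (m : ℝ) (p : α → ℝ) (a w : ν → α → κ → ℝ) (c : ν → ℝ) : Set ℝ :=
  {lam | ∃ x : α → κ → ℝ, (∀ j k, 0 ≤ x j k) ∧ (∀ j, ∑ k, x j k ≤ 1) ∧
    (∀ i, ∑ j, ∑ k, m * p j * a i j k * x j k ≤ c i) ∧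
    (∀ i, lam ≤ ∑ j, ∑ k, m * p j * w i j k * x j k)}

lemma sum_mul_mem_expectedInstanceValues [DecidableEq ι] [DecidableEq α] {p : α → ℝ}
    (hp : ∀ j, 0 ≤ p j) (hp1 : ∑ j, p j = 1) {a w : ν → α → κ → ℝ} {c : ν → ℝ}
    {lam : (ι → α) → ℝ} (hlam : ∀ R, lam R ∈ instanceValues a w c R) :
    ∑ R : ι → α, (∏ t, p (R t)) * lam R ∈ expectedInstanceValues (Fintype.card ι) p a w c := by
  choose x hx0 hx1 hxa hxw using hlam
  have hweight : ∀ R : ι → α, 0 ≤ ∏ t, p (R t) := fun R => prod_nonneg fun t _ => hp (R t)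
  have hvalue : ∀ f : α → κ → ℝ,
      ∑ j, ∑ k, Fintype.card ι * p j * f j k * (meanAggregate p x j k / (Fintype.card ι * p j))
        = ∑ R : ι → α, (∏ t, p (R t)) * ∑ t, ∑ k, f (R t) k * x R t k := by
    intro f
    rw [← sum_sum_mul_meanAggregate]
    refine sum_congr rfl fun j _ => sum_congr rfl fun k _ => ?_
    rw [mul_right_comm, mul_div_meanAggregate hp hp1 hx0 hx1, mul_comm]
  refine ⟨fun j k => meanAggregate p x j k / (Fintype.card ι * p j),
    fun j k => div_nonneg (meanAggregate_nonneg hp hx0 j k) (by positivity [hp j]),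
    fun j => ?_, fun i => ?_, fun i => ?_⟩
  · rw [← sum_div]
    exact div_le_one_of_le₀ (sum_meanAggregate_le hp hp1 hx1 j) (by positivity [hp j])
  · rw [hvalue]
    calc ∑ R : ι → α, (∏ t, p (R t)) * ∑ t, ∑ k, a i (R t) k * x R t k
        ≤ ∑ R : ι → α, (∏ t, p (R t)) * c i :=
          sum_le_sum fun R _ => mul_le_mul_of_nonneg_left (hxa R i) (hweight R)
      _ = c i := by rw [← sum_mul, sum_pi_prod_eq_one hp1, one_mul]
  · rw [hvalue]
    exact sum_le_sum fun R _ => mul_le_mul_of_nonneg_left (hxw R i) (hweight R)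

end InstanceLP

lemma sum_mul_csSup_le_csSup {β : Type*} [Fintype β] {P : β → ℝ} (hP : ∀ b, 0 ≤ P b)
    (hP1 : ∑ b, P b = 1) {S : β → Set ℝ} {T : Set ℝ} (hS : ∀ b, (S b).Nonempty)
    (hT : BddAbove T) (hST : ∀ lam : β → ℝ, (∀ b, lam b ∈ S b) → ∑ b, P b * lam b ∈ T) :
    ∑ b, P b * sSup (S b) ≤ sSup T := by
  refine le_of_forall_pos_le_add fun ε hε => ?_
  have hnear : ∀ b, ∃ l ∈ S b, sSup (S b) - ε < l := fun b =>
    exists_lt_of_lt_csSup (hS b) (sub_lt_self _ hε)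
  choose lam hlam hgt using hnear
  calc ∑ b, P b * sSup (S b)
      ≤ ∑ b, P b * (lam b + ε) :=
        sum_le_sum fun b _ => mul_le_mul_of_nonneg_left (by linarith [hgt b]) (hP b)
    _ = ∑ b, P b * lam b + ε := by simp only [mul_add, sum_add_distrib, ← sum_mul, hP1, one_mul]
    _ ≤ sSup T + ε := by gcongr; exact le_csSup hT (hST lam hlam)

theorem expected_instance_benchmark_general
    (n m K J : ℕ)
    (a w : Fin n → Fin J → Fin K → ℝ) (c : Fin n → ℝ)
    (p : Fin J → ℝ) (hp : ∀ j, 0 ≤ p j) (hp1 : ∑ j, p j = 1)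
    (FeasE : Set ℝ)
    (hFeasE : FeasE = {lam : ℝ | ∃ x : Fin J → Fin K → ℝ,
        (∀ j k, 0 ≤ x j k) ∧ (∀ j, ∑ k, x j k ≤ 1) ∧
        (∀ i, ∑ j, ∑ k, (m : ℝ) * p j * a i j k * x j k ≤ c i) ∧
        (∀ i, lam ≤ ∑ j, ∑ k, (m : ℝ) * p j * w i j k * x j k)})
    (FeasR : (Fin m → Fin J) → Set ℝ)
    (hFeasR : ∀ R, FeasR R = {lam : ℝ | ∃ x : Fin m → Fin K → ℝ,
        (∀ t k, 0 ≤ x t k) ∧ (∀ t, ∑ k, x t k ≤ 1) ∧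
        (∀ i, ∑ t, ∑ k, a i (R t) k * x t k ≤ c i) ∧
        (∀ i, lam ≤ ∑ t, ∑ k, w i (R t) k * x t k)})
    (hEbdd : BddAbove FeasE)
    (hRne : ∀ R, (FeasR R).Nonempty) :
    ∑ R : Fin m → Fin J, (∏ t, p (R t)) * sSup (FeasR R) ≤ sSup FeasE := by
  have hE : FeasE = expectedInstanceValues (Fintype.card (Fin m)) p a w c := by
    rw [hFeasE, Fintype.card_fin]; rfl
  have hR : FeasR = instanceValues a w c := funext hFeasR
  subst hE hR
  exact sum_mul_csSup_le_csSup (fun R => prod_nonneg fun t _ => hp (R t))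
    (sum_pi_prod_eq_one hp1) hRne hEbdd fun lam => sum_mul_mem_expectedInstanceValues hp hp1

/-- Lemma 1 (expected-instance benchmark): the optimal value `W_E` of the expected
instance LP upper bounds the expectation of the offline fractional optimum `W_R` of a
random instance of `m` requests drawn i.i.d. from the distribution `p`. -/
theorem expected_instance_benchmark
    (n m K J : ℕ) (hJ : 0 < J)
    (a w : Fin n → Fin J → Fin K → ℝ) (c : Fin n → ℝ)
    (ha : ∀ i j k, 0 ≤ a i j k) (hw : ∀ i j k, 0 ≤ w i j k) (hc : ∀ i, 0 ≤ c i)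
    (p : Fin J → ℝ) (hp : ∀ j, 0 ≤ p j) (hp1 : ∑ j, p j = 1)
    (FeasE : Set ℝ)
    (hFeasE : FeasE = {lam : ℝ | ∃ x : Fin J → Fin K → ℝ,
        (∀ j k, 0 ≤ x j k) ∧ (∀ j, ∑ k, x j k ≤ 1) ∧
        (∀ i, ∑ j, ∑ k, (m : ℝ) * p j * a i j k * x j k ≤ c i) ∧
        (∀ i, lam ≤ ∑ j, ∑ k, (m : ℝ) * p j * w i j k * x j k)})
    (FeasR : (Fin m → Fin J) → Set ℝ)
    (hFeasR : ∀ R, FeasR R = {lam : ℝ | ∃ x : Fin m → Fin K → ℝ,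
        (∀ t k, 0 ≤ x t k) ∧ (∀ t, ∑ k, x t k ≤ 1) ∧
        (∀ i, ∑ t, ∑ k, a i (R t) k * x t k ≤ c i) ∧
        (∀ i, lam ≤ ∑ t, ∑ k, w i (R t) k * x t k)})
    (hEne : FeasE.Nonempty) (hEbdd : BddAbove FeasE)
    (hRne : ∀ R, (FeasR R).Nonempty) (hRbdd : ∀ R, BddAbove (FeasR R)) :
    ∑ R : Fin m → Fin J, (∏ t, p (R t)) * sSup (FeasR R) ≤ sSup FeasE :=
  expected_instance_benchmark_general n m K J a w c p hp hp1 FeasE hFeasE FeasR hFeasR hEbdd hRne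
end

section
/- Fix an advertiser i with budget B_i > 0, bids b_{ij} ∈ [0, B_i] for queries j, and nonnegative weights x_{ij}, y_j with ∑_j b_{ij} x_{ij} y_j / m =: f_i(0)/m defined as above. Suppose after t−1 steps the advertiser has spent ∑_{r<t} w_i(r), and at step t a query drawn with probabilities x_{ij}y_j/m (summing to at most 1) is served, earning min(b_{ij}, B_i − ∑_{r<t} w_i(r)). Let EXCEED_i(t) = {j : b_{ij} > B_i − ∑_{r<t} w_i(r)}. Then the conditional expected spend satisfies E[w_i(t) | history] = ∑_{j∈EXCEED_i(t)} (B_i − ∑_{r<t} w_i(r))·x_{ij}y_j/m + ∑_{j∉EXCEED_i(t)} b_{ij}·x_{ij}y_j/m ≥ (f_i(0) − ∑_{r<t} w_i(r))/m, where f_i(0) = ∑_j b_{ij} x_{ij} y_j and f_i(0) ≤ B_i. -/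
/-- Lemma (adwordsPrelim): for the hypothetical Adwords algorithm, the conditional
expected spend of advertiser `i` at step `t`, namely
`∑_{j ∈ EXCEED} (B - S)·x_j y_j/m + ∑_{j ∉ EXCEED} b_j·x_j y_j/m`,
is at least `(f_i(0) - S)/m`, where `S` is the amount spent so far,
`EXCEED = {j : b_j > B - S}` and `f_i(0) = ∑_j b_j x_j y_j ≤ B`. -/
theorem adwords_prelim (m : ℕ) (hm : 0 < m) {J : Type*} [Fintype J]
    (B S : ℝ) (b x y : J → ℝ)
    (hB : 0 < B) (hb : ∀ j, 0 ≤ b j ∧ b j ≤ B)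
    (hx : ∀ j, 0 ≤ x j) (hy : ∀ j, 0 ≤ y j)
    (hS0 : 0 ≤ S) (hSB : S ≤ B)
    (hq : ∑ j, x j * y j / (m : ℝ) ≤ 1)
    (hf0 : ∑ j, b j * x j * y j ≤ B) :
    ((∑ j, b j * x j * y j) - S) / (m : ℝ) ≤
      ∑ j, (if B - S < b j then B - S else b j) * (x j * y j / (m : ℝ)) := by
  have hP : ∀ j, 0 ≤ x j * y j := fun j => mul_nonneg (hx j) (hy j)
  have hmin_nonneg : ∀ j, 0 ≤ (if B - S < b j then B - S else b j) := by
    intro j; split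
    · linarith
    · exact (hb j).1
  have key : (∑ j, b j * x j * y j) - S ≤
      ∑ j, (if B - S < b j then B - S else b j) * (x j * y j) := by
    classical
    set E := Finset.univ.filter (fun j => B - S < b j) with hEdef
    by_cases h : 1 ≤ ∑ j ∈ E, x j * y j
    · have h1 : B - S ≤ ∑ j ∈ E, (B - S) * (x j * y j) := by
        rw [← Finset.mul_sum]
        nlinarith
      have h2 : ∑ j ∈ E, (B - S) * (x j * y j) ≤
          ∑ j ∈ E, (if B - S < b j then B - S else b j) * (x j * y j) := by
        apply Finset.sum_le_sum
        intro j hj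
        rw [if_pos ((Finset.mem_filter.mp hj).2)]
      have h3 : ∑ j ∈ E, (if B - S < b j then B - S else b j) * (x j * y j) ≤
          ∑ j, (if B - S < b j then B - S else b j) * (x j * y j) :=
        Finset.sum_le_sum_of_subset_of_nonneg (Finset.subset_univ E)
          (fun j _ _ => mul_nonneg (hmin_nonneg j) (hP j))
      linarith
    · push_neg at h
      have hg : ∑ j, (if B - S < b j then S * (x j * y j) else 0) ≤ S := by
        rw [Finset.sum_ite, Finset.sum_const_zero, add_zero, ← Finset.mul_sum]
        calc S * ∑ j ∈ Finset.univ.filter (fun j => B - S < b j), x j * y j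
            ≤ S * 1 := by
              apply mul_le_mul_of_nonneg_left (le_of_lt h) hS0
          _ = S := mul_one S
      have hterm : ∀ j, b j * x j * y j - (if B - S < b j then S * (x j * y j) else 0)
          ≤ (if B - S < b j then B - S else b j) * (x j * y j) := by
        intro j
        split
        · nlinarith [(hb j).2, hP j]
        · rw [mul_assoc]; simp
      calc (∑ j, b j * x j * y j) - S
          ≤ (∑ j, b j * x j * y j) -
            ∑ j, (if B - S < b j then S * (x j * y j) else 0) := by linarith
        _ = ∑ j, (b j * x j * y j - (if B - S < b j then S * (x j * y j) else 0)) := by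
            rw [Finset.sum_sub_distrib]
        _ ≤ ∑ j, (if B - S < b j then B - S else b j) * (x j * y j) :=
            Finset.sum_le_sum (fun j _ => hterm j)
  have hm' : (0 : ℝ) < (m : ℝ) := by exact_mod_cast hm
  have : ((∑ j, b j * x j * y j) - S) / (m : ℝ) ≤
      (∑ j, (if B - S < b j then B - S else b j) * (x j * y j)) / (m : ℝ) := by
    gcongr
  calc ((∑ j, b j * x j * y j) - S) / (m : ℝ)
      ≤ (∑ j, (if B - S < b j then B - S else b j) * (x j * y j)) / (m : ℝ) := this
    _ = ∑ j, (if B - S < b j then B - S else b j) * (x j * y j / (m : ℝ)) := by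
        rw [Finset.sum_div]
        exact Finset.sum_congr rfl (fun j _ => by rw [mul_div_assoc])
end
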